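/- arXiv:1707.07515 — 5 statements merged into one kernel-verified Lean document; each statement's English description precedes it below -/
import Mathlib

section
/- Let ε > 0 and let x : [0,∞) → ℝ be a differentiable solution of the gradient-flow equation x′(t) = −f_ε′(x(t)) for all t ≥ 0. Then |x(t)² − x(0)²| ≤ 2πε for every t ≥ 0; in particular solutions of the gradient flow of f_ε never move far from their initial datum and get trapped near a local minimum. -/
open Real Set Filter Topology

/-! The square `y = x²` of a solution solves the autonomous equation
`y' = -4y(1 + 2 cos(y/ε))`, whose right-hand side is `C¹` and vanishes at `0` and at the levels
`ε b` with `cos b = -1/2`; consecutive such levels are `2πε` apart. By uniqueness of solutions,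
a trajectory of an autonomous equation with locally Lipschitz field cannot cross a rest point,
so `y(t)` stays between the two rest levels enclosing `y(0)`. -/

theorem ODE_solution_le_of_le_stationary {v : ℝ → ℝ} (hv : LocallyLipschitz v) {β : ℝ}
    (hβ : v β = 0) {x : ℝ → ℝ} {t₀ : ℝ} (hx : ∀ t ≥ t₀, HasDerivAt x (v (x t)) t)
    (h₀ : x t₀ ≤ β) {t : ℝ} (ht : t₀ ≤ t) : x t ≤ β := by
  by_contra! hβt
  have hcont : ContinuousOn x (Icc t₀ t) := fun s hs ↦ (hx s hs.1).continuousAt.continuousWithinAt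
  obtain ⟨s, hs, hxs⟩ := intermediate_value_Icc ht hcont ⟨h₀, hβt.le⟩
  have hcont' : ContinuousOn x (Icc s t) := hcont.mono (Icc_subset_Icc_left hs.1)
  obtain ⟨K, hK⟩ := LocallyLipschitzOn.exists_lipschitzOnWith_of_compact (f := v)
    (isCompact_Icc.image_of_continuousOn hcont') hv.locallyLipschitzOn
  have hconst : EqOn x (fun _ ↦ β) (Icc s t) :=
    ODE_solution_unique_of_mem_Icc_right (v := fun _ ↦ v) (fun _ _ ↦ hK) hcont'
      (fun r hr ↦ (hx r (hs.1.trans hr.1)).hasDerivWithinAt)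
      (fun r hr ↦ mem_image_of_mem x (Ico_subset_Icc_self hr)) continuousOn_const
      (fun r _ ↦ by simpa [hβ] using hasDerivWithinAt_const r (Ici r) β)
      (fun _ _ ↦ hxs ▸ mem_image_of_mem x (left_mem_Icc.2 hs.2)) hxs
  exact hβt.ne' (hconst (right_mem_Icc.2 hs.2))

theorem ODE_solution_ge_of_ge_stationary {v : ℝ → ℝ} (hv : LocallyLipschitz v) {α : ℝ}
    (hα : v α = 0) {x : ℝ → ℝ} {t₀ : ℝ} (hx : ∀ t ≥ t₀, HasDerivAt x (v (x t)) t)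
    (h₀ : α ≤ x t₀) {t : ℝ} (ht : t₀ ≤ t) : α ≤ x t := by
  have hneg : LocallyLipschitz (fun y ↦ -v (-y)) :=
    LipschitzWith.id.neg.locallyLipschitz.comp (hv.comp LipschitzWith.id.neg.locallyLipschitz)
  have := ODE_solution_le_of_le_stationary hneg (β := -α) (by simp [hα]) (x := -x)
    (fun s hs ↦ by simpa only [Pi.neg_apply, neg_neg] using (hx s hs).neg) (neg_le_neg h₀) ht
  simpa using this

theorem ODE_solution_mem_Icc_of_stationary {v : ℝ → ℝ} (hv : LocallyLipschitz v) {α β : ℝ}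
    (hα : v α = 0) (hβ : v β = 0) {x : ℝ → ℝ} {t₀ : ℝ}
    (hx : ∀ t ≥ t₀, HasDerivAt x (v (x t)) t) (h₀ : x t₀ ∈ Icc α β) {t : ℝ} (ht : t₀ ≤ t) :
    x t ∈ Icc α β :=
  ⟨ODE_solution_ge_of_ge_stationary hv hα hx h₀.1 ht,
    ODE_solution_le_of_le_stationary hv hβ hx h₀.2 ht⟩

theorem exists_cos_eq_neg_half_mem_Ico (θ : ℝ) : ∃ b ∈ Ico θ (θ + 2 * π), cos b = -(1 / 2) := by
  refine ⟨toIcoMod two_pi_pos θ (2 * π / 3), toIcoMod_mem_Ico _ _ _, ?_⟩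
  rw [← self_sub_toIcoDiv_zsmul, zsmul_eq_mul, cos_sub_int_mul_two_pi,
    show 2 * π / 3 = π - π / 3 by ring, cos_pi_sub, cos_pi_div_three]

/-- Let `ε > 0` and let `x : [0,∞) → ℝ` be a differentiable solution of the gradient-flow
equation `x′(t) = −f_ε′(x(t))` for the wiggly potential `f_ε(x) = x² + 2ε·sin(x²/ε)`
(whose derivative is `f_ε′(x) = 2x·(1 + 2·cos(x²/ε))`). Then `|x(t)² − x(0)²| ≤ 2πε`
for every `t ≥ 0`. -/
theorem stmt_2 (ε : ℝ) (hε : 0 < ε) (x : ℝ → ℝ)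
    (hx : ∀ t ≥ (0:ℝ), HasDerivAt x (-(2*(x t)*(1 + 2*Real.cos ((x t)^2/ε)))) t) :
    ∀ t ≥ (0:ℝ), |(x t)^2 - (x 0)^2| ≤ 2*Real.pi*ε := by
  set w : ℝ → ℝ := fun y ↦ -(4 * y * (1 + 2 * cos (y / ε)))
  have hsq : ∀ t ≥ (0:ℝ), HasDerivAt (fun s ↦ x s ^ 2) (w (x t ^ 2)) t := fun t ht ↦
    ((hx t ht).fun_pow 2).congr_deriv (by simp only [w]; push_cast; ring)
  have hw : LocallyLipschitz w := ContDiff.locallyLipschitz (𝕂 := ℝ) (by simp only [w]; fun_prop)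
  have hw_rest : ∀ b, cos b = -(1 / 2) → w (ε * b) = 0 := fun b hb ↦ by
    simp only [w, mul_div_cancel_left₀ b hε.ne', hb]; ring
  obtain ⟨b, ⟨hθb, hbθ⟩, hb⟩ := exists_cos_eq_neg_half_mem_Ico (x 0 ^ 2 / ε)
  have hw_low : w (max 0 (ε * (b - 2 * π))) = 0 := by
    rcases max_choice 0 (ε * (b - 2 * π)) with h | h <;> rw [h]
    · simp [w]
    · exact hw_rest _ (by rw [cos_sub_two_pi, hb])
  have h₀ : x 0 ^ 2 ∈ Icc (max 0 (ε * (b - 2 * π))) (ε * b) := by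
    have hlow : ε * (b - 2 * π) < x 0 ^ 2 := by rw [← lt_div_iff₀' hε]; linarith
    exact ⟨max_le (sq_nonneg _) hlow.le, (div_le_iff₀' hε).1 hθb⟩
  intro t ht
  calc |x t ^ 2 - x 0 ^ 2| = dist (x t ^ 2) (x 0 ^ 2) := (Real.dist_eq _ _).symm
    _ ≤ ε * b - max 0 (ε * (b - 2 * π)) :=
      Real.dist_le_of_mem_Icc
        (ODE_solution_mem_Icc_of_stationary hw hw_low (hw_rest b hb) hsq h₀ ht) h₀
    _ ≤ 2 * π * ε := by linarith [le_max_right 0 (ε * (b - 2 * π))]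
end

section
/- Let φ(x) = (2/π)·arctan(x) and W(u) = (cos(πu) + 1)/π. Then for every x ∈ ℝ the principal value A φ(x) = lim_{δ→0⁺} ∫_{{y : |y−x| ≥ δ}} (φ(y) − φ(x))/(y−x)² dy exists, and A φ(x) = −2x/(1+x²) = −sin(π·φ(x)) = W′(φ(x)). In other words, φ is a monotone increasing solution of the Peierls–Nabarro layer equation A φ − W′(φ) = 0 connecting the wells −1 and +1 of W. -/
/-!
Write `φ = (2/π) arctan`. Integrating by parts, `(φ y - φ x) / (y - x)²` has the primitive
`G y = -(φ y - φ x) / (y - x) + φ' x * (log |y - x| - log (1 + y²) / 2 - x * arctan y)`,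
the second term being a primitive of `φ' y / (y - x)` by partial fractions
(`Real.log` is `log |·|`, so one formula serves on both sides of `x`).
As `φ` is increasing, the integrand has a sign on each side of `x`, so both tails are integrable
and the truncated integral is `G (x - δ) - G (x + δ) + G (+∞) - G (-∞)`.
The logarithmic singularities of `G (x ∓ δ)` cancel and both difference quotients tend
to `φ' x`, so `G (x - δ) - G (x + δ) → 0`, while `arctan (±∞) = ±π/2` gives
`G (±∞) = ∓x / (1 + x²)`.
-/

open Real Set Filter Topology MeasureTheory Bornology

theorem integrableOn_Iic_deriv_of_nonpos' {g g' : ℝ → ℝ} {a l : ℝ}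
    (hderiv : ∀ x ∈ Iic a, HasDerivAt g (g' x) x) (g'neg : ∀ x ∈ Iio a, g' x ≤ 0)
    (hg : Tendsto g atBot (𝓝 l)) : IntegrableOn g' (Iic a) := by
  have hmirror : IntegrableOn (fun x => -g' (-x)) (Ioi (-a)) :=
    integrableOn_Ioi_deriv_of_nonneg' (g := fun x => g (-x))
      (fun x hx => by
        simpa [Function.comp_def] using
          (hderiv (-x) (neg_le.1 (mem_Ici.1 hx))).comp x (hasDerivAt_neg x))
      (fun x hx => neg_nonneg.2 (g'neg (-x) (neg_lt.1 (mem_Ioi.1 hx))))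
      (hg.comp tendsto_neg_atTop_atBot)
  rw [← (Measure.measurePreserving_neg volume).integrableOn_comp_preimage
    (Homeomorph.neg ℝ).measurableEmbedding, neg_preimage, neg_Iic,
    integrableOn_Ici_iff_integrableOn_Ioi]
  exact (by simpa using hmirror.neg : IntegrableOn (fun x => g' (-x)) (Ioi (-a)))

theorem integral_Iic_of_hasDerivAt_of_nonpos' {g g' : ℝ → ℝ} {a l : ℝ}
    (hderiv : ∀ x ∈ Iic a, HasDerivAt g (g' x) x) (g'neg : ∀ x ∈ Iio a, g' x ≤ 0)
    (hg : Tendsto g atBot (𝓝 l)) : ∫ x in Iic a, g' x = g a - l :=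
  integral_Iic_of_hasDerivAt_of_tendsto' hderiv
    (integrableOn_Iic_deriv_of_nonpos' hderiv g'neg hg) hg

theorem HasDerivAt.tendsto_slope_add_sub_slope_sub {f : ℝ → ℝ} {f' x : ℝ}
    (hf : HasDerivAt f f' x) :
    Tendsto (fun δ => slope f x (x + δ) - slope f x (x - δ)) (𝓝[≠] 0) (𝓝 0) := by
  have hneg : Tendsto (fun δ : ℝ => -δ) (𝓝[≠] 0) (𝓝[≠] 0) :=
    tendsto_nhdsWithin_iff.2 ⟨by simpa using (tendsto_neg (0 : ℝ)).mono_left nhdsWithin_le_nhds,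
      eventually_nhdsWithin_of_forall fun δ hδ => neg_ne_zero.2 hδ⟩
  have h := hasDerivAt_iff_tendsto_slope_zero.1 hf
  simpa [slope_def_module, sub_eq_add_neg] using h.sub (h.comp hneg)

theorem tendsto_slope_cobounded_of_abs_le {f : ℝ → ℝ} {C : ℝ} (hf : ∀ y, |f y| ≤ C)
    (x : ℝ) : Tendsto (slope f x) (cobounded ℝ) (𝓝 0) := by
  have hinv : Tendsto (fun y => (y - x)⁻¹) (cobounded ℝ) (𝓝 0) :=
    tendsto_inv₀_cobounded.comp (tendsto_sub_const_cobounded x)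
  have hbdd : IsBoundedUnder (· ≤ ·) (cobounded ℝ) fun y => ‖f y - f x‖ :=
    isBoundedUnder_of_eventually_le (a := C + C) (Eventually.of_forall fun y =>
      (norm_sub_le _ _).trans (add_le_add (hf y) (hf x)))
  refine (hinv.zero_mul_isBoundedUnder_le hbdd).congr fun y => ?_
  rw [slope_def_field, div_eq_inv_mul]

theorem tendsto_log_sub_sub_half_log_one_add_sq_cobounded (x : ℝ) :
    Tendsto (fun y => log (y - x) - log (1 + y ^ 2) / 2) (cobounded ℝ) (𝓝 0) := by
  set h : ℝ → ℝ := fun t => log ((1 - x * t) ^ 2 / (t ^ 2 + 1)) / 2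
  have hcont : ContinuousAt h 0 :=
    ((ContinuousAt.log (by fun_prop (disch := positivity)) (by simp)).div_const 2)
  have hlim : Tendsto (h ∘ Inv.inv) (cobounded ℝ) (𝓝 0) := by
    simpa [h] using hcont.tendsto.comp tendsto_inv₀_cobounded
  refine hlim.congr' ?_
  filter_upwards [eventually_ne_cobounded 0, eventually_ne_cobounded x] with y hy0 hyx
  have hratio : (1 - x * y⁻¹) ^ 2 / (y⁻¹ ^ 2 + 1) = (y - x) ^ 2 / (1 + y ^ 2) := by
    field_simp
  simp only [Function.comp_apply, h, hratio]
  rw [log_div (pow_ne_zero _ (sub_ne_zero.2 hyx)) (by positivity), log_pow]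
  push_cast
  ring

noncomputable def truncatedHalfLaplacian (w : ℝ → ℝ) (x δ : ℝ) : ℝ :=
  ∫ y in {y | δ ≤ |y - x|}, (w y - w x) / (y - x) ^ 2

theorem setOf_le_abs_sub_eq (x δ : ℝ) :
    {y : ℝ | δ ≤ |y - x|} = Iic (x - δ) ∪ Ici (x + δ) := by
  ext y
  simp only [mem_ofPred_eq, mem_union, mem_Iic, mem_Ici, le_abs]
  constructor <;> rintro (h | h) <;> [right; left; right; left] <;> linarith

theorem truncatedHalfLaplacian_eq_of_hasDerivAt {w G : ℝ → ℝ} {x δ a b : ℝ}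
    (hw : Monotone w) (hδ : 0 < δ) (hG : ∀ y ≠ x, HasDerivAt G ((w y - w x) / (y - x) ^ 2) y)
    (hbot : Tendsto G atBot (𝓝 a)) (htop : Tendsto G atTop (𝓝 b)) :
    truncatedHalfLaplacian w x δ = G (x - δ) - G (x + δ) + (b - a) := by
  have hleft : ∀ y ∈ Iic (x - δ), HasDerivAt G ((w y - w x) / (y - x) ^ 2) y :=
    fun y hy => hG y (by linarith [mem_Iic.1 hy])
  have hright : ∀ y ∈ Ici (x + δ), HasDerivAt G ((w y - w x) / (y - x) ^ 2) y :=
    fun y hy => hG y (by linarith [mem_Ici.1 hy])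
  have hnonpos : ∀ y ∈ Iio (x - δ), (w y - w x) / (y - x) ^ 2 ≤ 0 := fun y hy =>
    div_nonpos_of_nonpos_of_nonneg (sub_nonpos.2 (hw (by linarith [mem_Iio.1 hy])))
      (sq_nonneg _)
  have hnonneg : ∀ y ∈ Ioi (x + δ), 0 ≤ (w y - w x) / (y - x) ^ 2 := fun y hy =>
    div_nonneg (sub_nonneg.2 (hw (by linarith [mem_Ioi.1 hy]))) (sq_nonneg _)
  have hintegrable : IntegrableOn (fun y => (w y - w x) / (y - x) ^ 2) (Ici (x + δ)) := by
    rw [integrableOn_Ici_iff_integrableOn_Ioi]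
    exact integrableOn_Ioi_deriv_of_nonneg' hright hnonneg htop
  rw [truncatedHalfLaplacian, setOf_le_abs_sub_eq,
    setIntegral_union (Iic_disjoint_Ici.2 (by linarith)) measurableSet_Ici
      (integrableOn_Iic_deriv_of_nonpos' hleft hnonpos hbot) hintegrable,
    integral_Ici_eq_integral_Ioi, integral_Iic_of_hasDerivAt_of_nonpos' hleft hnonpos hbot,
    integral_Ioi_of_hasDerivAt_of_nonneg' hright hnonneg htop]
  ring

noncomputable def arctanProfile (x : ℝ) : ℝ := 2 / π * arctan x

theorem hasDerivAt_arctanProfile (x : ℝ) :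
    HasDerivAt arctanProfile (2 / (π * (1 + x ^ 2))) x := by
  refine ((hasDerivAt_arctan x).const_mul (2 / π)).congr_deriv ?_
  field_simp

theorem arctanProfile_strictMono : StrictMono arctanProfile :=
  arctan_strictMono.const_mul (by positivity)

theorem abs_arctanProfile_le_one (x : ℝ) : |arctanProfile x| ≤ 1 := by
  rw [arctanProfile, abs_mul, abs_of_pos (by positivity : (0 : ℝ) < 2 / π)]
  have := abs_lt.2 ⟨neg_pi_div_two_lt_arctan x, arctan_lt_pi_div_two x⟩
  calc 2 / π * |arctan x| ≤ 2 / π * (π / 2) := by gcongr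
    _ = 1 := by field_simp

theorem tendsto_arctanProfile_atTop : Tendsto arctanProfile atTop (𝓝 1) := by
  have h := (tendsto_arctan_atTop.mono_right nhdsWithin_le_nhds).const_mul (2 / π)
  rwa [show 2 / π * (π / 2) = 1 by field_simp] at h

theorem tendsto_arctanProfile_atBot : Tendsto arctanProfile atBot (𝓝 (-1)) := by
  have h := (tendsto_arctan_atBot.mono_right nhdsWithin_le_nhds).const_mul (2 / π)
  rwa [show 2 / π * -(π / 2) = -1 by field_simp] at h

theorem sin_pi_mul_arctanProfile (x : ℝ) : sin (π * arctanProfile x) = 2 * x / (1 + x ^ 2) := by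
  have hsqrt : √(1 + x ^ 2) ^ 2 = 1 + x ^ 2 := sq_sqrt (by positivity)
  rw [arctanProfile, show π * (2 / π * arctan x) = 2 * arctan x by field_simp, sin_two_mul,
    sin_arctan, cos_arctan]
  field_simp
  rw [hsqrt]

theorem hasDerivAt_cos_pi_mul_add_one_div_pi (u : ℝ) :
    HasDerivAt (fun u => (cos (π * u) + 1) / π) (-sin (π * u)) u := by
  refine (((hasDerivAt_id u).const_mul π).cos.add_const 1).div_const π |>.congr_deriv ?_
  simp only [id, mul_one]
  field_simp

noncomputable def pvPrimitive (x y : ℝ) : ℝ :=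
  -slope arctanProfile x y +
    2 / (π * (1 + x ^ 2)) * (log (y - x) - log (1 + y ^ 2) / 2 - x * arctan y)

theorem hasDerivAt_pvPrimitive {x y : ℝ} (hy : y ≠ x) :
    HasDerivAt (pvPrimitive x) ((arctanProfile y - arctanProfile x) / (y - x) ^ 2) y := by
  have hyx : y - x ≠ 0 := sub_ne_zero.2 hy
  have hslope : HasDerivAt (fun y => (arctanProfile y - arctanProfile x) / (y - x))
      ((2 / (π * (1 + y ^ 2)) * (y - x) - (arctanProfile y - arctanProfile x)) / (y - x) ^ 2)
      y := by
    simpa using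
      ((hasDerivAt_arctanProfile y).sub_const _).fun_div ((hasDerivAt_id y).sub_const x) hyx
  have hlog : HasDerivAt (fun y => log (y - x) - log (1 + y ^ 2) / 2 - x * arctan y)
      (1 / (y - x) - 2 * y / (1 + y ^ 2) / 2 - x * (1 / (1 + y ^ 2))) y := by
    have h1 := ((hasDerivAt_id y).sub_const x).log hyx
    have h2 := (((hasDerivAt_id y).pow 2).const_add 1).log (by simp; positivity)
    simpa using (h1.fun_sub (h2.div_const 2)).fun_sub ((hasDerivAt_arctan y).const_mul x)
  have hfun : pvPrimitive x = fun y => -((arctanProfile y - arctanProfile x) / (y - x)) +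
      2 / (π * (1 + x ^ 2)) * (log (y - x) - log (1 + y ^ 2) / 2 - x * arctan y) := by
    ext y
    rw [pvPrimitive, slope_def_field]
  rw [hfun]
  refine (hslope.fun_neg.fun_add (hlog.const_mul (2 / (π * (1 + x ^ 2))))).congr_deriv ?_
  field_simp
  ring

theorem tendsto_pvPrimitive {l : Filter ℝ} {t : ℝ} (hl : l ≤ cobounded ℝ)
    (harctan : Tendsto arctan l (𝓝 t)) (x : ℝ) :
    Tendsto (pvPrimitive x) l (𝓝 (-(2 / (π * (1 + x ^ 2)) * (x * t)))) := by
  have hslope := (tendsto_slope_cobounded_of_abs_le abs_arctanProfile_le_one x).mono_left hl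
  have hlog := (tendsto_log_sub_sub_half_log_one_add_sq_cobounded x).mono_left hl
  rw [show -(2 / (π * (1 + x ^ 2)) * (x * t)) = -0 + 2 / (π * (1 + x ^ 2)) * (0 - x * t) by
    ring]
  exact hslope.neg.add ((hlog.sub (harctan.const_mul x)).const_mul (2 / (π * (1 + x ^ 2))))

theorem tendsto_pvPrimitive_sub_sub (x : ℝ) :
    Tendsto (fun δ => pvPrimitive x (x - δ) - pvPrimitive x (x + δ)) (𝓝[≠] 0) (𝓝 0) := by
  set K : ℝ → ℝ := fun y => log (1 + y ^ 2) / 2 + x * arctan y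
  have hK : Tendsto (fun δ => K (x + δ) - K (x - δ)) (𝓝 0) (𝓝 0) := by
    have : Continuous fun δ => K (x + δ) - K (x - δ) := by
      simp only [K]
      fun_prop (disch := intros; positivity)
    simpa using this.tendsto 0
  have hsplit : ∀ δ, pvPrimitive x (x - δ) - pvPrimitive x (x + δ) =
      (slope arctanProfile x (x + δ) - slope arctanProfile x (x - δ)) +
        2 / (π * (1 + x ^ 2)) * (K (x + δ) - K (x - δ)) := by
    intro δ
    simp only [pvPrimitive, K, add_sub_cancel_left, sub_sub_cancel_left, log_neg_eq_log]
    ring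
  simpa [hsplit] using (hasDerivAt_arctanProfile x).tendsto_slope_add_sub_slope_sub.add
    ((hK.mono_left nhdsWithin_le_nhds).const_mul (2 / (π * (1 + x ^ 2))))

theorem tendsto_truncatedHalfLaplacian_arctanProfile (x : ℝ) :
    Tendsto (truncatedHalfLaplacian arctanProfile x) (𝓝[>] 0) (𝓝 (-2 * x / (1 + x ^ 2))) := by
  have htop := tendsto_pvPrimitive IsOrderBornology.atTop_le_cobounded
    (tendsto_arctan_atTop.mono_right nhdsWithin_le_nhds) x
  have hbot := tendsto_pvPrimitive IsOrderBornology.atBot_le_cobounded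
    (tendsto_arctan_atBot.mono_right nhdsWithin_le_nhds) x
  have hsym := (tendsto_pvPrimitive_sub_sub x).mono_left
    (nhdsWithin_mono _ fun δ (hδ : 0 < δ) => hδ.ne')
  have hvalue : 0 + (-(2 / (π * (1 + x ^ 2)) * (x * (π / 2))) -
      -(2 / (π * (1 + x ^ 2)) * (x * -(π / 2)))) = -2 * x / (1 + x ^ 2) := by
    field_simp
    ring
  rw [← hvalue]
  refine (hsym.add_const _).congr' ?_
  filter_upwards [self_mem_nhdsWithin] with δ hδ
  exact (truncatedHalfLaplacian_eq_of_hasDerivAt arctanProfile_strictMono.monotone hδ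
    (fun y hy => hasDerivAt_pvPrimitive hy) hbot htop).symm

/-- Let `φ(x) = (2/π)·arctan(x)` and `W(u) = (cos(πu) + 1)/π`. For every `x` the principal
value `A φ(x) = lim_{δ→0⁺} ∫_{|y−x|≥δ} (φ(y) − φ(x))/(y−x)² dy` exists and equals
`−2x/(1+x²) = −sin(π·φ(x)) = W′(φ(x))`; moreover `φ` is monotone increasing and connects
the wells `−1` and `+1` of `W`. -/
theorem stmt_6 :
    StrictMono (fun x : ℝ => (2/Real.pi)*Real.arctan x) ∧
    Tendsto (fun x : ℝ => (2/Real.pi)*Real.arctan x) atTop (𝓝 1) ∧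
    Tendsto (fun x : ℝ => (2/Real.pi)*Real.arctan x) atBot (𝓝 (-1)) ∧
    ∀ x : ℝ,
      Tendsto (fun δ : ℝ => ∫ y in {y : ℝ | δ ≤ |y - x|},
          ((2/Real.pi)*Real.arctan y - (2/Real.pi)*Real.arctan x)/(y - x)^2)
        (𝓝[>] (0:ℝ)) (𝓝 (-2*x/(1+x^2))) ∧
      -2*x/(1+x^2) = -Real.sin (Real.pi * ((2/Real.pi)*Real.arctan x)) ∧
      -Real.sin (Real.pi * ((2/Real.pi)*Real.arctan x)) =
        deriv (fun u : ℝ => (Real.cos (Real.pi*u) + 1)/Real.pi)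
          ((2/Real.pi)*Real.arctan x) := by
  refine ⟨arctanProfile_strictMono, tendsto_arctanProfile_atTop, tendsto_arctanProfile_atBot,
    fun x => ⟨tendsto_truncatedHalfLaplacian_arctanProfile x, ?_,
      (hasDerivAt_cos_pi_mul_add_one_div_pi _).deriv.symm⟩⟩
  rw [← arctanProfile, sin_pi_mul_arctanProfile]
  ring
end

section
/- For every x ∈ ℝ, the principal value lim_{δ→0⁺} ∫_{{y : |y−x| ≥ δ}} 1/((1+y²)(y−x)) dy exists and equals −πx/(1+x²). -/
/-!
With `c = (1 + x²)⁻¹`, the function `F(y) = c (log|y - x| - ½ log(1 + y²) - x arctan y)` is a primitive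
of the integrand away from `y = x`, and `F(±∞) = ∓ c x π/2`. Hence the integral over
`(-∞, x - δ] ∪ [x + δ, ∞)` equals `F(x - δ) - F(x + δ) - π x c`. The singular terms `log|∓δ|`
cancel, so what is left is a continuous function of `δ` whose value at `δ = 0` is `-π x c`.
-/

open Real Set Filter Topology MeasureTheory

namespace PoissonHilbert

noncomputable section

def integrand (x y : ℝ) : ℝ := 1 / ((1 + y ^ 2) * (y - x))

def regularPart (x y : ℝ) : ℝ := -(1 / 2) * log (1 + y ^ 2) - x * arctan y

/-- `Real.log (y - x)` is `log |y - x|`, so this is a primitive on both sides of `x`. -/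
def primitive (x y : ℝ) : ℝ := (1 + x ^ 2)⁻¹ * (log (y - x) + regularPart x y)

lemma continuous_regularPart (x : ℝ) : Continuous (regularPart x) := by
  unfold regularPart
  have : Continuous fun y : ℝ => log (1 + y ^ 2) :=
    (by fun_prop : Continuous fun y : ℝ => 1 + y ^ 2).log fun y => by positivity
  fun_prop

lemma hasDerivAt_primitive {x y : ℝ} (hy : y ≠ x) :
    HasDerivAt (primitive x) (integrand x y) y := by
  have hyx : y - x ≠ 0 := sub_ne_zero.2 hy
  have hlog : HasDerivAt (fun y : ℝ => log (y - x)) (y - x)⁻¹ y := by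
    simpa using ((hasDerivAt_id y).sub_const x).log hyx
  have hlog_sq : HasDerivAt (fun y : ℝ => log (1 + y ^ 2)) (2 * y / (1 + y ^ 2)) y := by
    simpa using ((hasDerivAt_pow 2 y).const_add 1).log (by positivity)
  refine ((hlog.add ((hlog_sq.const_mul (-(1 / 2))).sub
    ((hasDerivAt_arctan y).const_mul x))).const_mul (1 + x ^ 2)⁻¹).congr_deriv ?_
  have : 1 + y ^ 2 ≠ 0 := by positivity
  unfold integrand
  field_simp
  ring

lemma tendsto_log_add_sub_half_log_one_add_sq (a : ℝ) :
    Tendsto (fun y => log (y + a) - 1 / 2 * log (1 + y ^ 2)) atTop (𝓝 0) := by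
  have hsq : Tendsto (fun y : ℝ => log (y ^ 2 + 1) - log (y ^ 2)) atTop (𝓝 0) :=
    (tendsto_log_comp_add_sub_log 1).comp (tendsto_pow_atTop two_ne_zero)
  convert (tendsto_log_comp_add_sub_log a).sub (hsq.const_mul (1 / 2)) using 2 with y
  · rw [log_pow, add_comm (y ^ 2)]
    push_cast
    ring
  · simp

lemma tendsto_primitive_atTop (x : ℝ) :
    Tendsto (primitive x) atTop (𝓝 ((1 + x ^ 2)⁻¹ * (-x * (π / 2)))) := by
  have harctan := (tendsto_arctan_atTop.mono_right nhdsWithin_le_nhds).const_mul x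
  convert ((tendsto_log_add_sub_half_log_one_add_sq (-x)).sub harctan).const_mul
    (1 + x ^ 2)⁻¹ using 2 with y
  · simp only [primitive, regularPart, ← sub_eq_add_neg]
    ring
  · ring

lemma tendsto_primitive_atBot (x : ℝ) :
    Tendsto (primitive x) atBot (𝓝 ((1 + x ^ 2)⁻¹ * (x * (π / 2)))) := by
  have harctan := (tendsto_arctan_atTop.mono_right nhdsWithin_le_nhds).const_mul x
  refine tendsto_comp_neg_atTop_iff.mp ?_
  convert ((tendsto_log_add_sub_half_log_one_add_sq x).add harctan).const_mul
    (1 + x ^ 2)⁻¹ using 2 with t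
  · simp only [primitive, regularPart, arctan_neg, neg_sq]
    rw [show -t - x = -(t + x) by ring, log_neg_eq_log]
    ring
  · ring

lemma setOf_le_abs_sub (x δ : ℝ) :
    {y : ℝ | δ ≤ |y - x|} = Iic (x - δ) ∪ Ici (x + δ) := by
  ext y
  simp only [mem_ofPred_eq, mem_union, mem_Iic, mem_Ici, le_abs']
  constructor <;> rintro (h | h) <;> [left; right; left; right] <;> linarith

lemma integrableOn_integrand {x δ : ℝ} (hδ : 0 < δ) :
    IntegrableOn (integrand x) {y | δ ≤ |y - x|} := by
  have hmeas : MeasurableSet {y : ℝ | δ ≤ |y - x|} :=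
    measurableSet_le measurable_const (by fun_prop)
  refine (integrable_inv_one_add_sq.const_mul δ⁻¹).integrableOn.mono' ?_ ?_
  · exact (by unfold integrand; fun_prop : Measurable (integrand x)).aestronglyMeasurable
  refine (ae_restrict_iff' hmeas).2 (ae_of_all _ fun y (hy : δ ≤ |y - x|) => ?_)
  have hpos : 0 < 1 + y ^ 2 := by positivity
  calc ‖integrand x y‖ = (1 + y ^ 2)⁻¹ * |y - x|⁻¹ := by
        simp [integrand, abs_of_pos hpos, mul_comm]
    _ ≤ (1 + y ^ 2)⁻¹ * δ⁻¹ := by gcongr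
    _ = δ⁻¹ * (1 + y ^ 2)⁻¹ := mul_comm _ _

lemma integral_integrand_eq {x δ : ℝ} (hδ : 0 < δ) :
    ∫ y in {y | δ ≤ |y - x|}, integrand x y =
      (1 + x ^ 2)⁻¹ * (regularPart x (x - δ) - regularPart x (x + δ)) - π * x / (1 + x ^ 2) := by
  have hint := integrableOn_integrand (x := x) hδ
  rw [setOf_le_abs_sub] at hint ⊢
  have hdisj : Disjoint (Iic (x - δ)) (Ici (x + δ)) :=
    Iic_disjoint_Ici.2 (by linarith)
  rw [setIntegral_union hdisj measurableSet_Ici (hint.mono_set subset_union_left)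
    (hint.mono_set subset_union_right), integral_Ici_eq_integral_Ioi,
    integral_Iic_of_hasDerivAt_of_tendsto'
      (fun y hy => hasDerivAt_primitive (by linarith [mem_Iic.1 hy]))
      (hint.mono_set subset_union_left) (tendsto_primitive_atBot x),
    integral_Ioi_of_hasDerivAt_of_tendsto'
      (fun y hy => hasDerivAt_primitive (by linarith [mem_Ici.1 hy]))
      ((hint.mono_set subset_union_right).mono_set Ioi_subset_Ici_self)
      (tendsto_primitive_atTop x)]
  simp only [primitive]
  rw [show x - δ - x = -δ by ring, log_neg_eq_log, show x + δ - x = δ by ring]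
  field_simp
  ring

end

end PoissonHilbert

open PoissonHilbert

/-- For every `x ∈ ℝ`, the principal value
`lim_{δ→0⁺} ∫_{|y−x|≥δ} 1/((1+y²)(y−x)) dy` exists and equals `−πx/(1+x²)`. -/
theorem stmt_7 (x : ℝ) :
    Tendsto (fun δ : ℝ => ∫ y in {y : ℝ | δ ≤ |y - x|}, 1/((1+y^2)*(y - x)))
      (𝓝[>] (0:ℝ)) (𝓝 (-Real.pi*x/(1+x^2))) := by
  have hcont : Continuous fun δ =>
      (1 + x ^ 2)⁻¹ * (regularPart x (x - δ) - regularPart x (x + δ)) - π * x / (1 + x ^ 2) := by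
    have := continuous_regularPart x
    fun_prop
  have hlim := (hcont.tendsto 0).mono_left (nhdsWithin_le_nhds (s := Ioi 0))
  rw [sub_zero, add_zero, sub_self, mul_zero, zero_sub, ← neg_div, ← neg_mul] at hlim
  refine hlim.congr' ?_
  filter_upwards [self_mem_nhdsWithin] with δ hδ
  exact (integral_integrand_eq hδ).symm
end

section
/- Let w : ℝ → ℝ be bounded and twice differentiable with bounded second derivative, say |w(y)| ≤ M₀ and |w″(y)| ≤ M₂ for all y. Then for every x ∈ ℝ the principal value A w(x) = lim_{δ→0⁺} ∫_{{y : |y−x| ≥ δ}} (w(y) − w(x))/(y−x)² dy exists, and for every L > 0 it satisfies |A w(x)| ≤ L·M₂ + 4·M₀/L. -/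
open Real Set Filter Topology MeasureTheory

/-!
Folding the principal value onto `t = |y - x|` turns it into `∫_{t > δ} Δ(t) / t² dt` with
the symmetric second difference `Δ(t) = w(x + t) + w(x - t) - 2 w(x)`; this is where the odd
first-order Taylor term cancels. The bound `|w''| ≤ M₂` gives `|Δ(t)| ≤ M₂ t²` and `|w| ≤ M₀`
gives `|Δ(t)| ≤ 4 M₀`, so `Δ(t) / t²` is integrable on `(0, ∞)`, the principal value is its
integral, and splitting that integral at `t = L` gives `L M₂ + 4 M₀ / L`.
-/

lemma abs_second_difference_le {w w' w'' : ℝ → ℝ} {M₂ : ℝ}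
    (hw1 : ∀ y, HasDerivAt w (w' y) y) (hw2 : ∀ y, HasDerivAt w' (w'' y) y)
    (hM2 : ∀ y, |w'' y| ≤ M₂) (x t : ℝ) :
    |w (x + t) + w (x - t) - 2 * w x| ≤ M₂ * t ^ 2 := by
  wlog ht : 0 ≤ t generalizing t
  · simpa [← sub_eq_add_neg, add_comm (w (x - t))] using this (-t) (by linarith)
  have hlip : ∀ a b, |w' a - w' b| ≤ M₂ * |a - b| := fun a b => by
    simpa using Convex.norm_image_sub_le_of_norm_hasDerivWithin_le
      (fun z _ => (hw2 z).hasDerivWithinAt) (fun z _ => hM2 z) convex_univ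
      (mem_univ b) (mem_univ a)
  have hψ : ∀ s, HasDerivAt (fun s => w (x + s) + w (x - s) - 2 * w x)
      (w' (x + s) - w' (x - s)) s := fun s => by
    simpa [sub_eq_add_neg] using
      (((hw1 _).comp s ((hasDerivAt_id s).const_add x)).add
        ((hw1 _).comp s ((hasDerivAt_id s).const_sub x))).sub_const (2 * w x)
  have hB : ∀ s, HasDerivAt (fun s => M₂ * s ^ 2) (2 * M₂ * s) s := fun s => by
    simpa [mul_comm, mul_left_comm, mul_assoc] using (hasDerivAt_pow 2 s).const_mul M₂
  refine image_norm_le_of_norm_deriv_right_le_deriv_boundary (a := 0) (b := t)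
    (fun s _ => (hψ s).continuousAt.continuousWithinAt) (fun s _ => (hψ s).hasDerivWithinAt)
    (by simp [two_mul]) hB (fun s hs => ?_) ⟨ht, le_rfl⟩
  calc ‖w' (x + s) - w' (x - s)‖ ≤ M₂ * |x + s - (x - s)| := hlip _ _
    _ = 2 * M₂ * s := by
      rw [show x + s - (x - s) = 2 * s by ring, abs_of_nonneg (by linarith [hs.1])]
      ring

lemma rpow_neg_two_eqOn_Ioi {L : ℝ} (hL : 0 < L) :
    EqOn (fun t : ℝ => t ^ (-2 : ℝ)) (fun t => (t ^ 2)⁻¹) (Ioi L) := fun t ht => by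
  simp [rpow_neg (hL.trans ht).le]

lemma integrableOn_Ioi_inv_sq {L : ℝ} (hL : 0 < L) :
    IntegrableOn (fun t : ℝ => (t ^ 2)⁻¹) (Ioi L) :=
  (integrableOn_Ioi_rpow_of_lt (by norm_num) hL).congr_fun (rpow_neg_two_eqOn_Ioi hL)
    measurableSet_Ioi

lemma integral_Ioi_inv_sq {L : ℝ} (hL : 0 < L) : ∫ t in Ioi L, (t ^ 2)⁻¹ = L⁻¹ := by
  rw [← setIntegral_congr_fun measurableSet_Ioi (rpow_neg_two_eqOn_Ioi hL),
    integral_Ioi_rpow_of_lt (by norm_num) hL]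
  norm_num [rpow_neg_one]

lemma integrableOn_Ioi_of_abs_le_div_sq {F : ℝ → ℝ} {K a : ℝ} (ha : 0 < a)
    (hF : AEStronglyMeasurable F (volume.restrict (Ioi a)))
    (hK : ∀ t > a, |F t| ≤ K / t ^ 2) : IntegrableOn F (Ioi a) :=
  ((integrableOn_Ioi_inv_sq ha).const_mul K).mono' hF <|
    (ae_restrict_mem measurableSet_Ioi).mono fun t ht => by
      simpa [div_eq_mul_inv] using hK t ht

lemma integrableOn_Ioi_zero_of_abs_le {F : ℝ → ℝ} {A K : ℝ}
    (hF : AEStronglyMeasurable F (volume.restrict (Ioi 0)))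
    (hA : ∀ t > 0, |F t| ≤ A) (hK : ∀ t > 0, |F t| ≤ K / t ^ 2) : IntegrableOn F (Ioi 0) := by
  rw [← Ioc_union_Ioi_eq_Ioi zero_le_one]
  refine IntegrableOn.union ?_ (integrableOn_Ioi_of_abs_le_div_sq one_pos
    (hF.mono_set (Ioi_subset_Ioi zero_le_one)) fun t ht => hK t (one_pos.trans ht))
  exact (integrableOn_const (C := A) measure_Ioc_lt_top.ne).mono'
    (hF.mono_set Ioc_subset_Ioi_self)
    ((ae_restrict_mem measurableSet_Ioc).mono fun t ht => hA t ht.1)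

lemma abs_integral_Ioi_zero_le {F : ℝ → ℝ} {A K L : ℝ} (hF : IntegrableOn F (Ioi 0))
    (hA : ∀ t > 0, |F t| ≤ A) (hK : ∀ t > 0, |F t| ≤ K / t ^ 2) (hL : 0 < L) :
    |∫ t in Ioi 0, F t| ≤ L * A + K / L := by
  have hnear : ‖∫ t in Ioc 0 L, F t‖ ≤ A * volume.real (Ioc 0 L) :=
    norm_setIntegral_le_of_norm_le_const measure_Ioc_lt_top fun t ht => hA t ht.1
  have hfar : ‖∫ t in Ioi L, F t‖ ≤ ∫ t in Ioi L, K * (t ^ 2)⁻¹ :=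
    norm_integral_le_of_norm_le ((integrableOn_Ioi_inv_sq hL).const_mul K) <|
      (ae_restrict_mem measurableSet_Ioi).mono fun t ht => by
        simpa [div_eq_mul_inv] using hK t (hL.trans ht)
  rw [integral_const_mul, integral_Ioi_inv_sq hL] at hfar
  rw [Real.volume_real_Ioc_of_le hL.le] at hnear
  rw [← Ioc_union_Ioi_eq_Ioi hL.le, setIntegral_union Ioc_disjoint_Ioi_same measurableSet_Ioi
    (hF.mono_set Ioc_subset_Ioi_self) (hF.mono_set (Ioi_subset_Ioi hL.le))]
  calc |(∫ t in Ioc 0 L, F t) + ∫ t in Ioi L, F t|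
      ≤ ‖∫ t in Ioc 0 L, F t‖ + ‖∫ t in Ioi L, F t‖ := abs_add_le _ _
    _ ≤ L * A + K / L := by rw [div_eq_mul_inv]; linarith

lemma tendsto_setIntegral_Ioi_nhdsGT {E : Type*} [NormedAddCommGroup E] [NormedSpace ℝ E]
    {F : ℝ → E} {a : ℝ} (hF : IntegrableOn F (Ioi a)) :
    Tendsto (fun δ => ∫ t in Ioi δ, F t) (𝓝[>] a) (𝓝 (∫ t in Ioi a, F t)) := by
  have hind : ∀ δ ∈ Ioi a, ∫ t in Ioi δ, F t = ∫ t in Ioi a, (Ioi δ).indicator F t :=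
    fun δ hδ => by
      rw [setIntegral_indicator measurableSet_Ioi, Ioi_inter_Ioi, sup_eq_right.2 (le_of_lt hδ)]
  refine Tendsto.congr' (eventually_nhdsWithin_of_forall fun δ hδ => (hind δ hδ).symm) ?_
  refine tendsto_integral_filter_of_dominated_convergence (fun t => ‖F t‖)
    (Eventually.of_forall fun δ => hF.aestronglyMeasurable.indicator measurableSet_Ioi)
    (Eventually.of_forall fun δ => ae_of_all _ fun t => norm_indicator_le_norm_self _ _)
    hF.norm ((ae_restrict_mem measurableSet_Ioi).mono fun t ht => ?_)
  refine tendsto_const_nhds.congr' ?_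
  filter_upwards [nhdsWithin_le_nhds (Iio_mem_nhds ht)] with δ hδ
  exact (indicator_of_mem (mem_Ioi.2 hδ) F).symm

lemma setIntegral_le_abs_sub_eq_integral_Ioi {E : Type*} [NormedAddCommGroup E] [NormedSpace ℝ E]
    {f : ℝ → E} {x δ : ℝ} (hδ : 0 < δ) (hright : IntegrableOn (fun t => f (x + t)) (Ioi δ))
    (hleft : IntegrableOn (fun t => f (x - t)) (Ioi δ)) :
    ∫ y in {y | δ ≤ |y - x|}, f y = ∫ t in Ioi δ, (f (x + t) + f (x - t)) := by
  have hadd := (measurePreserving_add_left volume x).setIntegral_preimage_emb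
    (measurableEmbedding_addLeft x) f (Ici (x + δ))
  have hsub := (Measure.measurePreserving_sub_left volume x).setIntegral_preimage_emb
    (measurableEmbedding_subLeft x) f (Iic (x - δ))
  have iadd := ((measurePreserving_add_left volume x).integrableOn_comp_preimage
    (measurableEmbedding_addLeft x) (f := f) (s := Ici (x + δ)))
  have isub := ((Measure.measurePreserving_sub_left volume x).integrableOn_comp_preimage
    (measurableEmbedding_subLeft x) (f := f) (s := Iic (x - δ)))
  simp only [preimage_const_add_Ici, preimage_const_sub_Iic, add_sub_cancel_left,
    sub_sub_cancel, integral_Ici_eq_integral_Ioi] at hadd hsub iadd isub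
  rw [integrableOn_Ici_iff_integrableOn_Ioi] at iadd isub
  have hset : {y | δ ≤ |y - x|} = Iic (x - δ) ∪ Ici (x + δ) := by
    ext y
    simp only [mem_ofPred_eq, mem_union, mem_Iic, mem_Ici, le_abs, neg_sub]
    constructor <;> rintro (h | h) <;> [right; left; right; left] <;> linarith
  rw [integral_add hright hleft, hadd, hsub, hset,
    setIntegral_union (Iic_disjoint_Ici.2 (by linarith)) measurableSet_Ici
      (isub.1 hleft) (iadd.1 hright), add_comm, integral_Ici_eq_integral_Ioi]

/-- Let `w : ℝ → ℝ` be bounded (`|w| ≤ M₀`) and twice differentiable with bounded second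
derivative (`|w″| ≤ M₂`). Then for every `x` the principal value
`A w(x) = lim_{δ→0⁺} ∫_{|y−x|≥δ} (w(y) − w(x))/(y−x)² dy` exists, and for every `L > 0`
it satisfies `|A w(x)| ≤ L·M₂ + 4·M₀/L`. -/
theorem stmt_10 (w w' w'' : ℝ → ℝ) (M₀ M₂ : ℝ)
    (hw0 : ∀ y, |w y| ≤ M₀)
    (hw1 : ∀ y, HasDerivAt w (w' y) y)
    (hw2 : ∀ y, HasDerivAt w' (w'' y) y)
    (hM2 : ∀ y, |w'' y| ≤ M₂) :
    ∀ x : ℝ, ∃ A : ℝ,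
      Tendsto (fun δ : ℝ => ∫ y in {y : ℝ | δ ≤ |y - x|}, (w y - w x)/(y - x)^2)
        (𝓝[>] (0:ℝ)) (𝓝 A) ∧
      ∀ L > (0:ℝ), |A| ≤ L*M₂ + 4*M₀/L := by
  intro x
  have hw : Measurable w :=
    (continuous_iff_continuousAt.2 fun y => (hw1 y).continuousAt).measurable
  have hw_sub : ∀ a b, |w a - w b| ≤ 2 * M₀ := fun a b =>
    (abs_sub _ _).trans (by linarith [hw0 a, hw0 b])
  set F : ℝ → ℝ := fun t => (w (x + t) + w (x - t) - 2 * w x) / t ^ 2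
  have hF₂ : ∀ t > 0, |F t| ≤ M₂ := fun t ht => by
    rw [abs_div, abs_sq, div_le_iff₀ (by positivity)]
    exact abs_second_difference_le hw1 hw2 hM2 x t
  have hF₀ : ∀ t > 0, |F t| ≤ 4 * M₀ / t ^ 2 := fun t ht => by
    rw [abs_div, abs_sq]
    gcongr
    calc |w (x + t) + w (x - t) - 2 * w x| = |(w (x + t) - w x) + (w (x - t) - w x)| := by
          ring_nf
      _ ≤ 4 * M₀ := (abs_add_le _ _).trans (by linarith [hw_sub (x + t) x, hw_sub (x - t) x])
  have hF : IntegrableOn F (Ioi 0) :=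
    integrableOn_Ioi_zero_of_abs_le (by fun_prop : Measurable F).aestronglyMeasurable hF₂ hF₀
  have hreduce : ∀ δ > 0, ∫ t in Ioi δ, F t =
      ∫ y in {y : ℝ | δ ≤ |y - x|}, (w y - w x) / (y - x) ^ 2 := fun δ hδ => by
    rw [setIntegral_le_abs_sub_eq_integral_Ioi hδ ?_ ?_]
    · simp only [add_sub_cancel_left, sub_sub_cancel_left, neg_sq, F]
      congr with t
      ring
    all_goals
      refine integrableOn_Ioi_of_abs_le_div_sq (K := 2 * M₀) hδ
        (Measurable.aestronglyMeasurable (by fun_prop)) fun t ht => ?_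
      simp only [add_sub_cancel_left, sub_sub_cancel_left, neg_sq, abs_div, abs_sq]
      gcongr
      exact hw_sub _ _
  exact ⟨∫ t in Ioi 0, F t,
    (tendsto_setIntegral_Ioi_nhdsGT hF).congr' (eventually_nhdsWithin_of_forall hreduce),
    fun L hL => abs_integral_Ioi_zero_le hF hF₂ hF₀ hL⟩
end

section
/- Let g : ℝ² → ℝ be bounded and twice continuously differentiable with bounded second derivative, say |g(y)| ≤ M₀ and ‖D²g(y)‖ ≤ M₂ (operator norm) for all y ∈ ℝ². Then for every x ∈ ℝ² the principal value A g(x) = lim_{δ→0⁺} ∫_{{y : |y−x| ≥ δ}} (g(y) − g(x))/|y−x|³ dy exists, and for every L > 0 it satisfies |A g(x)| ≤ π·L·M₂ + 4π·M₀/L. -/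
/-!
Symmetrising under `u ↦ -u` replaces `g (x + u) - g x` in the integrand by half the second
difference `g (x + u) + g (x - u) - 2 g x`, which is at most `M₂ ‖u‖²` (Taylor) and at most
`4 M₀`. The symmetrised integrand is thus bounded by `M₂/2 · ‖u‖^(1-d)` and by
`2 M₀ · ‖u‖^(-d-1)`, hence integrable, and the truncated integral at `δ` differs from its
integral by an integral over the ball of radius `δ`, which is `O(δ)`. Splitting at radius `L`
and integrating both bounds in polar coordinates (the unit sphere has area `d · vol B₁`, which is
`2π` in the plane) gives the estimate.
-/

open Real Set Filter Topology MeasureTheory Metric Module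

lemma pow_add_one_eq_pow_sub_one_mul_sq {M : Type*} [Monoid M] (y : M) {n : ℕ} (hn : n ≠ 0) :
    y ^ (n + 1) = y ^ (n - 1) * y ^ 2 := by
  rw [← pow_add]
  congr 1
  omega

lemma pow_sub_one_mul_inv_pow_add_one {y : ℝ} (hy : 0 < y) {n : ℕ} (hn : n ≠ 0) :
    y ^ (n - 1) * (y ^ (n + 1))⁻¹ = y ^ (-2 : ℝ) := by
  rw [pow_add_one_eq_pow_sub_one_mul_sq y hn, rpow_neg hy.le, rpow_two]
  field_simp

lemma compl_setOf_norm_lt {E : Type*} [Norm E] (r : ℝ) :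
    {u : E | ‖u‖ < r}ᶜ = {u | r ≤ ‖u‖} := by
  ext
  simp

lemma indicator_norm_preimage {E F : Type*} [Norm E] [Zero F] (f : ℝ → F) (s : Set ℝ) :
    (norm ⁻¹' s).indicator (fun x : E ↦ f ‖x‖) = fun x ↦ s.indicator f ‖x‖ :=
  funext fun _ ↦ indicator_comp_right norm

lemma setIntegral_comp_neg_of_neg_eq {G F : Type*} [MeasurableSpace G] [InvolutiveNeg G]
    [MeasurableNeg G] [NormedAddCommGroup F] [NormedSpace ℝ F] (μ : Measure G) [μ.IsNegInvariant]
    {S : Set G} (hS : -S = S) (f : G → F) :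
    ∫ u in S, f (-u) ∂μ = ∫ u in S, f u ∂μ := by
  conv_lhs => rw [← hS]
  exact (Measure.measurePreserving_neg μ).setIntegral_preimage_emb measurableEmbedding_neg f S

section SecondDifference

variable {E F : Type*} [NormedAddCommGroup E] [NormedSpace ℝ E] [NormedAddCommGroup F]
  [NormedSpace ℝ F] {g : E → F} {M : ℝ}

lemma norm_fderiv_sub_fderiv_le (hg : ContDiff ℝ 2 g)
    (hg2 : ∀ y, ‖iteratedFDeriv ℝ 2 g y‖ ≤ M) (a b : E) :
    ‖fderiv ℝ g a - fderiv ℝ g b‖ ≤ M * ‖a - b‖ := by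
  have hdiff : Differentiable ℝ (fderiv ℝ g) :=
    (hg.fderiv_right (m := 1) le_rfl).differentiable one_ne_zero
  refine convex_univ.norm_image_sub_le_of_norm_fderiv_le (fun y _ ↦ hdiff y)
    (fun y _ ↦ ?_) (mem_univ b) (mem_univ a)
  rw [← norm_iteratedFDeriv_one, norm_iteratedFDeriv_fderiv]
  exact hg2 y

lemma norm_add_add_sub_two_smul_le (hg : ContDiff ℝ 2 g)
    (hg2 : ∀ y, ‖iteratedFDeriv ℝ 2 g y‖ ≤ M) (x u : E) :
    ‖g (x + u) + g (x - u) - (2 : ℝ) • g x‖ ≤ M * ‖u‖ ^ 2 := by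
  have hdiff : Differentiable ℝ g := hg.differentiable two_ne_zero
  let φ : ℝ → F := fun t ↦ g (x + t • u) + g (x - t • u) - (2 : ℝ) • g x
  let φ' : ℝ → F := fun t ↦ fderiv ℝ g (x + t • u) u - fderiv ℝ g (x - t • u) u
  have hφ (t : ℝ) : HasDerivAt φ (φ' t) t := by
    have hplus := (hdiff _).hasFDerivAt.comp_hasDerivAt t
      (((hasDerivAt_id t).smul_const u).const_add x)
    have hminus := (hdiff _).hasFDerivAt.comp_hasDerivAt t
      (((hasDerivAt_id t).smul_const u).const_sub x)
    refine ((hplus.add hminus).sub_const ((2 : ℝ) • g x)).congr_deriv ?_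
    simp [φ', sub_eq_add_neg]
  have hφ' : ∀ t ∈ Ico (0 : ℝ) 1, ‖φ' t‖ ≤ 2 * M * ‖u‖ ^ 2 * t := by
    intro t ht
    calc ‖φ' t‖ = ‖(fderiv ℝ g (x + t • u) - fderiv ℝ g (x - t • u)) u‖ := rfl
      _ ≤ M * ‖(x + t • u) - (x - t • u)‖ * ‖u‖ :=
        (ContinuousLinearMap.le_opNorm _ _).trans
          (by gcongr; exact norm_fderiv_sub_fderiv_le hg hg2 _ _)
      _ = 2 * M * ‖u‖ ^ 2 * t := by
        rw [add_sub_sub_cancel, ← two_smul ℝ, smul_smul, norm_smul, norm_mul, norm_two,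
          Real.norm_of_nonneg ht.1]
        ring
  -- Compare `φ` with `M ‖u‖² t²`: both vanish at `0` and its derivative dominates `‖φ'‖`.
  have hB (t : ℝ) : HasDerivAt (fun s ↦ M * ‖u‖ ^ 2 * s ^ 2) (2 * M * ‖u‖ ^ 2 * t) t :=
    ((hasDerivAt_pow 2 t).const_mul (M * ‖u‖ ^ 2)).congr_deriv (by norm_num; ring)
  have h1 := image_norm_le_of_norm_deriv_right_le_deriv_boundary
    (fun t _ ↦ (hφ t).continuousAt.continuousWithinAt) (fun t _ ↦ (hφ t).hasDerivWithinAt)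
    (by simp [φ, two_smul]) hB hφ' (right_mem_Icc.2 zero_le_one)
  simpa [φ] using h1

end SecondDifference

section Radial

variable {E F : Type*} [NormedAddCommGroup E] [NormedSpace ℝ E] [FiniteDimensional ℝ E]
  [MeasurableSpace E] [BorelSpace E] [Nontrivial E] [NormedAddCommGroup F] [NormedSpace ℝ F]
  (μ : Measure E) [μ.IsAddHaarMeasure]

lemma integrableOn_norm_preimage_iff {f : ℝ → F} {s : Set ℝ} (hs : MeasurableSet s) :
    IntegrableOn (fun x : E ↦ f ‖x‖) (norm ⁻¹' s) μ ↔
      IntegrableOn (fun y : ℝ ↦ y ^ (finrank ℝ E - 1) • f y) (s ∩ Ioi 0) := by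
  rw [← integrable_indicator_iff (hs.preimage measurable_norm), indicator_norm_preimage,
    integrable_fun_norm_addHaar, IntegrableOn, ← indicator_smul, integrable_indicator_iff hs,
    IntegrableOn, Measure.restrict_restrict hs]
  rfl

lemma setIntegral_norm_preimage (f : ℝ → F) {s : Set ℝ} (hs : MeasurableSet s) :
    ∫ x in norm ⁻¹' s, f ‖x‖ ∂μ =
      finrank ℝ E • μ.real (ball 0 1) • ∫ y in s ∩ Ioi 0, y ^ (finrank ℝ E - 1) • f y := by
  rw [← integral_indicator (hs.preimage measurable_norm), indicator_norm_preimage,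
    integral_fun_norm_addHaar, ← indicator_smul, integral_indicator hs,
    Measure.restrict_restrict hs]

lemma integrableOn_norm_lt_inv_norm_pow_sub_one (r : ℝ) :
    IntegrableOn (fun u : E ↦ (‖u‖ ^ (finrank ℝ E - 1))⁻¹) {u | ‖u‖ < r} μ := by
  refine (integrableOn_norm_preimage_iff μ (f := fun y ↦ (y ^ (finrank ℝ E - 1))⁻¹)
    measurableSet_Iio).2 ?_
  rw [Iio_inter_Ioi]
  refine (integrableOn_const (C := (1 : ℝ)) measure_Ioo_lt_top.ne).congr_fun
    (fun y hy ↦ ?_) measurableSet_Ioo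
  simp [(pow_pos hy.1 _).ne']

lemma setIntegral_norm_lt_inv_norm_pow_sub_one {r : ℝ} (hr : 0 ≤ r) :
    ∫ u in {u | ‖u‖ < r}, (‖u‖ ^ (finrank ℝ E - 1))⁻¹ ∂μ =
      finrank ℝ E * μ.real (ball 0 1) * r := by
  rw [show {u : E | ‖u‖ < r} = norm ⁻¹' Iio r from rfl,
    setIntegral_norm_preimage μ (fun y ↦ (y ^ (finrank ℝ E - 1))⁻¹) measurableSet_Iio,
    Iio_inter_Ioi, setIntegral_congr_fun measurableSet_Ioo (g := fun _ ↦ (1 : ℝ))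
      (fun y hy ↦ by simp [(pow_pos hy.1 _).ne'])]
  simp [hr, mul_assoc]

lemma integrableOn_le_norm_inv_norm_pow_add_one {L : ℝ} (hL : 0 < L) :
    IntegrableOn (fun u : E ↦ (‖u‖ ^ (finrank ℝ E + 1))⁻¹) {u | L ≤ ‖u‖} μ := by
  refine (integrableOn_norm_preimage_iff μ (f := fun y ↦ (y ^ (finrank ℝ E + 1))⁻¹)
    measurableSet_Ici).2 ?_
  rw [inter_eq_left.2 (Ici_subset_Ioi.2 hL), integrableOn_Ici_iff_integrableOn_Ioi]
  exact (integrableOn_Ioi_rpow_of_lt (by norm_num) hL).congr_fun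
    (fun y hy ↦ (pow_sub_one_mul_inv_pow_add_one (hL.trans hy) finrank_pos.ne').symm)
    measurableSet_Ioi

lemma setIntegral_le_norm_inv_norm_pow_add_one {L : ℝ} (hL : 0 < L) :
    ∫ u in {u | L ≤ ‖u‖}, (‖u‖ ^ (finrank ℝ E + 1))⁻¹ ∂μ =
      finrank ℝ E * μ.real (ball 0 1) / L := by
  rw [show {u : E | L ≤ ‖u‖} = norm ⁻¹' Ici L from rfl,
    setIntegral_norm_preimage μ (fun y ↦ (y ^ (finrank ℝ E + 1))⁻¹) measurableSet_Ici,
    inter_eq_left.2 (Ici_subset_Ioi.2 hL), integral_Ici_eq_integral_Ioi,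
    setIntegral_congr_fun (g := fun y ↦ y ^ (-2 : ℝ))
      (f := fun y ↦ y ^ (finrank ℝ E - 1) • (y ^ (finrank ℝ E + 1))⁻¹) measurableSet_Ioi
      (fun y hy ↦ pow_sub_one_mul_inv_pow_add_one (hL.trans hy) finrank_pos.ne'),
    integral_Ioi_rpow_of_lt (by norm_num) hL]
  norm_num [rpow_neg_one, div_eq_mul_inv, mul_assoc]

end Radial

section KernelBounds

variable {E F : Type*} [NormedAddCommGroup E] [NormedSpace ℝ E] [FiniteDimensional ℝ E]
  [MeasurableSpace E] [BorelSpace E] [Nontrivial E] [NormedAddCommGroup F]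
  (μ : Measure E) [μ.IsAddHaarMeasure] {K : E → F} {A B : ℝ}

lemma integrableOn_norm_lt_of_norm_le (hK : AEStronglyMeasurable K μ)
    (hA : ∀ u, ‖K u‖ ≤ A * (‖u‖ ^ (finrank ℝ E - 1))⁻¹) (r : ℝ) :
    IntegrableOn K {u | ‖u‖ < r} μ :=
  ((integrableOn_norm_lt_inv_norm_pow_sub_one μ r).const_mul A).mono' hK.restrict
    (ae_of_all _ hA)

lemma integrableOn_le_norm_of_norm_le (hK : AEStronglyMeasurable K μ)
    (hB : ∀ u, ‖K u‖ ≤ B * (‖u‖ ^ (finrank ℝ E + 1))⁻¹) {L : ℝ} (hL : 0 < L) :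
    IntegrableOn K {u | L ≤ ‖u‖} μ :=
  ((integrableOn_le_norm_inv_norm_pow_add_one μ hL).const_mul B).mono' hK.restrict
    (ae_of_all _ hB)

lemma norm_setIntegral_norm_lt_le [NormedSpace ℝ F]
    (hA : ∀ u, ‖K u‖ ≤ A * (‖u‖ ^ (finrank ℝ E - 1))⁻¹) {r : ℝ} (hr : 0 ≤ r) :
    ‖∫ u in {u | ‖u‖ < r}, K u ∂μ‖ ≤ A * (finrank ℝ E * μ.real (ball 0 1)) * r := by
  refine (norm_integral_le_of_norm_le
    ((integrableOn_norm_lt_inv_norm_pow_sub_one μ r).const_mul A) (ae_of_all _ hA)).trans_eq ?_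
  rw [integral_const_mul, setIntegral_norm_lt_inv_norm_pow_sub_one μ hr]
  ring

lemma norm_setIntegral_le_norm_le [NormedSpace ℝ F]
    (hB : ∀ u, ‖K u‖ ≤ B * (‖u‖ ^ (finrank ℝ E + 1))⁻¹) {L : ℝ} (hL : 0 < L) :
    ‖∫ u in {u | L ≤ ‖u‖}, K u ∂μ‖ ≤ B * (finrank ℝ E * μ.real (ball 0 1)) / L := by
  refine (norm_integral_le_of_norm_le
    ((integrableOn_le_norm_inv_norm_pow_add_one μ hL).const_mul B) (ae_of_all _ hB)).trans_eq ?_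
  rw [integral_const_mul, setIntegral_le_norm_inv_norm_pow_add_one μ hL]
  ring

lemma integrable_of_norm_le_inv_norm_pow (hK : AEStronglyMeasurable K μ)
    (hA : ∀ u, ‖K u‖ ≤ A * (‖u‖ ^ (finrank ℝ E - 1))⁻¹)
    (hB : ∀ u, ‖K u‖ ≤ B * (‖u‖ ^ (finrank ℝ E + 1))⁻¹) : Integrable K μ := by
  have h := (integrableOn_norm_lt_of_norm_le μ hK hA 1).union
    (integrableOn_le_norm_of_norm_le μ hK hB one_pos)
  rwa [← compl_setOf_norm_lt, union_compl_self, integrableOn_univ] at h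

lemma norm_integral_le_of_norm_le_inv_norm_pow [NormedSpace ℝ F]
    (hK : AEStronglyMeasurable K μ) (hA : ∀ u, ‖K u‖ ≤ A * (‖u‖ ^ (finrank ℝ E - 1))⁻¹)
    (hB : ∀ u, ‖K u‖ ≤ B * (‖u‖ ^ (finrank ℝ E + 1))⁻¹) {L : ℝ} (hL : 0 < L) :
    ‖∫ u, K u ∂μ‖ ≤
      A * (finrank ℝ E * μ.real (ball 0 1)) * L + B * (finrank ℝ E * μ.real (ball 0 1)) / L := by
  rw [← integral_add_compl (measurableSet_lt measurable_norm measurable_const)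
    (integrable_of_norm_le_inv_norm_pow μ hK hA hB), compl_setOf_norm_lt]
  exact (norm_add_le _ _).trans (add_le_add (norm_setIntegral_norm_lt_le μ hA hL.le)
    (norm_setIntegral_le_norm_le μ hB hL))

end KernelBounds

section HalfLaplacian

variable {E : Type*} [NormedAddCommGroup E] [NormedSpace ℝ E]

noncomputable def halfLaplacianIntegrand (g : E → ℝ) (x u : E) : ℝ :=
  (g (x + u) - g x) / ‖u‖ ^ (finrank ℝ E + 1)

noncomputable def symmetrizedIntegrand (g : E → ℝ) (x u : E) : ℝ :=
  (halfLaplacianIntegrand g x u + halfLaplacianIntegrand g x (-u)) / 2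

variable {g : E → ℝ} {M₀ M₂ : ℝ}

lemma norm_halfLaplacianIntegrand_le_of_abs_le (hg0 : ∀ y, |g y| ≤ M₀) (x u : E) :
    ‖halfLaplacianIntegrand g x u‖ ≤ 2 * M₀ * (‖u‖ ^ (finrank ℝ E + 1))⁻¹ := by
  rw [halfLaplacianIntegrand, norm_div, norm_pow, norm_norm, div_eq_mul_inv]
  gcongr
  calc ‖g (x + u) - g x‖ ≤ |g (x + u)| + |g x| := norm_sub_le _ _
    _ ≤ 2 * M₀ := by linarith [hg0 (x + u), hg0 x]

lemma norm_symmetrizedIntegrand_le_of_abs_le (hg0 : ∀ y, |g y| ≤ M₀) (x u : E) :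
    ‖symmetrizedIntegrand g x u‖ ≤ 2 * M₀ * (‖u‖ ^ (finrank ℝ E + 1))⁻¹ := by
  have hpos := norm_halfLaplacianIntegrand_le_of_abs_le hg0 x u
  have hneg := norm_halfLaplacianIntegrand_le_of_abs_le hg0 x (-u)
  rw [norm_neg] at hneg
  rw [symmetrizedIntegrand, norm_div, Real.norm_two]
  linarith [norm_add_le (halfLaplacianIntegrand g x u) (halfLaplacianIntegrand g x (-u))]

lemma norm_symmetrizedIntegrand_le_of_iteratedFDeriv [FiniteDimensional ℝ E] [Nontrivial E]
    (hg : ContDiff ℝ 2 g) (hg2 : ∀ y, ‖iteratedFDeriv ℝ 2 g y‖ ≤ M₂) (x u : E) :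
    ‖symmetrizedIntegrand g x u‖ ≤ M₂ / 2 * (‖u‖ ^ (finrank ℝ E - 1))⁻¹ := by
  have hM₂ : 0 ≤ M₂ := (norm_nonneg _).trans (hg2 0)
  rcases eq_or_ne u 0 with rfl | hu
  · simp only [symmetrizedIntegrand, halfLaplacianIntegrand, neg_zero, add_zero, sub_self,
      zero_div, norm_zero]
    positivity
  have hpow := pow_add_one_eq_pow_sub_one_mul_sq ‖u‖ (finrank_pos (R := ℝ) (M := E)).ne'
  have hsecond := norm_add_add_sub_two_smul_le hg hg2 x u
  have hidentity : symmetrizedIntegrand g x u =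
      (g (x + u) + g (x - u) - (2 : ℝ) • g x) / (2 * ‖u‖ ^ (finrank ℝ E + 1)) := by
    simp only [symmetrizedIntegrand, halfLaplacianIntegrand, norm_neg, ← sub_eq_add_neg,
      smul_eq_mul]
    ring
  rw [hidentity, norm_div, norm_mul, Real.norm_two, norm_pow, norm_norm, hpow,
    div_le_iff₀ (by positivity)]
  calc _ ≤ M₂ * ‖u‖ ^ 2 := hsecond
    _ = _ := by field_simp

variable [MeasurableSpace E] [BorelSpace E]

lemma measurable_halfLaplacianIntegrand (hg : Continuous g) (x : E) :
    Measurable (halfLaplacianIntegrand g x) := by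
  have := hg.measurable
  unfold halfLaplacianIntegrand
  fun_prop

lemma measurable_symmetrizedIntegrand (hg : Continuous g) (x : E) :
    Measurable (symmetrizedIntegrand g x) := by
  have := measurable_halfLaplacianIntegrand hg x
  unfold symmetrizedIntegrand
  fun_prop

variable [FiniteDimensional ℝ E] [Nontrivial E] (μ : Measure E) [μ.IsAddHaarMeasure]

lemma setIntegral_le_norm_sub_eq_setIntegral_symmetrizedIntegrand (hg : Continuous g)
    (hg0 : ∀ y, |g y| ≤ M₀) (x : E) {δ : ℝ} (hδ : 0 < δ) :
    ∫ y in {y | δ ≤ ‖y - x‖}, (g y - g x) / ‖y - x‖ ^ (finrank ℝ E + 1) ∂μ =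
      ∫ u in {u | δ ≤ ‖u‖}, symmetrizedIntegrand g x u ∂μ := by
  set S : Set E := {u | δ ≤ ‖u‖}
  have hS : -S = S := by ext; simp [S]
  have hmeas := measurable_halfLaplacianIntegrand hg x
  have hint : IntegrableOn (halfLaplacianIntegrand g x) S μ :=
    integrableOn_le_norm_of_norm_le μ hmeas.aestronglyMeasurable
      (norm_halfLaplacianIntegrand_le_of_abs_le hg0 x) hδ
  have hint_neg : IntegrableOn (fun u ↦ halfLaplacianIntegrand g x (-u)) S μ :=
    integrableOn_le_norm_of_norm_le μ (hmeas.comp measurable_neg).aestronglyMeasurable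
      (fun u ↦ by simpa using norm_halfLaplacianIntegrand_le_of_abs_le hg0 x (-u)) hδ
  calc ∫ y in {y | δ ≤ ‖y - x‖}, (g y - g x) / ‖y - x‖ ^ (finrank ℝ E + 1) ∂μ
      = ∫ y in (· - x) ⁻¹' S, halfLaplacianIntegrand g x (y - x) ∂μ := by
        simp [halfLaplacianIntegrand, S]
    _ = ∫ u in S, halfLaplacianIntegrand g x u ∂μ :=
        (measurePreserving_sub_right μ x).setIntegral_preimage_emb
          (measurableEmbedding_subRight x) _ S
    _ = ∫ u in S, symmetrizedIntegrand g x u ∂μ := by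
        simp only [symmetrizedIntegrand]
        rw [integral_div, integral_add hint hint_neg,
          setIntegral_comp_neg_of_neg_eq μ hS (halfLaplacianIntegrand g x)]
        ring

lemma tendsto_setIntegral_le_norm_sub (hg : ContDiff ℝ 2 g) (hg0 : ∀ y, |g y| ≤ M₀)
    (hg2 : ∀ y, ‖iteratedFDeriv ℝ 2 g y‖ ≤ M₂) (x : E) :
    Tendsto (fun δ : ℝ ↦
        ∫ y in {y | δ ≤ ‖y - x‖}, (g y - g x) / ‖y - x‖ ^ (finrank ℝ E + 1) ∂μ)
      (𝓝[>] 0) (𝓝 (∫ u, symmetrizedIntegrand g x u ∂μ)) := by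
  have hK := (measurable_symmetrizedIntegrand hg.continuous x).aestronglyMeasurable (μ := μ)
  have hnear := norm_symmetrizedIntegrand_le_of_iteratedFDeriv hg hg2 x
  have hK_int := integrable_of_norm_le_inv_norm_pow μ hK hnear
    (norm_symmetrizedIntegrand_le_of_abs_le hg0 x)
  rw [tendsto_iff_norm_sub_tendsto_zero]
  refine squeeze_zero' (Eventually.of_forall fun _ ↦ norm_nonneg _) ?_
    (g := fun δ ↦ M₂ / 2 * (finrank ℝ E * μ.real (ball 0 1)) * δ) ?_
  · filter_upwards [self_mem_nhdsWithin] with δ (hδ : 0 < δ)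
    rw [setIntegral_le_norm_sub_eq_setIntegral_symmetrizedIntegrand μ hg.continuous hg0 x hδ,
      ← integral_add_compl (measurableSet_lt measurable_norm measurable_const) hK_int,
      compl_setOf_norm_lt, sub_add_cancel_right, norm_neg]
    exact norm_setIntegral_norm_lt_le μ hnear hδ.le
  · exact tendsto_nhdsWithin_of_tendsto_nhds
      ((continuous_const.mul continuous_id).tendsto' 0 0 (mul_zero _))

lemma abs_integral_symmetrizedIntegrand_le (hg : ContDiff ℝ 2 g) (hg0 : ∀ y, |g y| ≤ M₀)
    (hg2 : ∀ y, ‖iteratedFDeriv ℝ 2 g y‖ ≤ M₂) (x : E) {L : ℝ} (hL : 0 < L) :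
    |∫ u, symmetrizedIntegrand g x u ∂μ| ≤
      M₂ / 2 * (finrank ℝ E * μ.real (ball 0 1)) * L +
        2 * M₀ * (finrank ℝ E * μ.real (ball 0 1)) / L :=
  norm_integral_le_of_norm_le_inv_norm_pow μ
    (measurable_symmetrizedIntegrand hg.continuous x).aestronglyMeasurable
    (norm_symmetrizedIntegrand_le_of_iteratedFDeriv hg hg2 x)
    (norm_symmetrizedIntegrand_le_of_abs_le hg0 x) hL

end HalfLaplacian

/-- Let `g : ℝ² → ℝ` be bounded (`|g| ≤ M₀`) and twice continuously differentiable with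
bounded second derivative (`‖D²g‖ ≤ M₂` in operator norm). Then for every `x ∈ ℝ²` the
principal value `A g(x) = lim_{δ→0⁺} ∫_{|y−x|≥δ} (g(y) − g(x))/|y−x|³ dy` exists, and
for every `L > 0` it satisfies `|A g(x)| ≤ π·L·M₂ + 4π·M₀/L`. -/
theorem stmt_11 (g : EuclideanSpace ℝ (Fin 2) → ℝ) (M₀ M₂ : ℝ)
    (hg : ContDiff ℝ 2 g)
    (hg0 : ∀ y, |g y| ≤ M₀)
    (hg2 : ∀ y, ‖iteratedFDeriv ℝ 2 g y‖ ≤ M₂) :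
    ∀ x : EuclideanSpace ℝ (Fin 2), ∃ A : ℝ,
      Tendsto (fun δ : ℝ =>
          ∫ y in {y : EuclideanSpace ℝ (Fin 2) | δ ≤ ‖y - x‖},
            (g y - g x)/‖y - x‖^3)
        (𝓝[>] (0:ℝ)) (𝓝 A) ∧
      ∀ L > (0:ℝ), |A| ≤ Real.pi*L*M₂ + 4*Real.pi*M₀/L := by
  intro x
  have hdim : finrank ℝ (EuclideanSpace ℝ (Fin 2)) = 2 := finrank_euclideanSpace_fin
  have hball : (volume : Measure (EuclideanSpace ℝ (Fin 2))).real (ball 0 1) = π := by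
    simp [Measure.real, pi_nonneg]
  refine ⟨∫ u, symmetrizedIntegrand g x u, ?_, fun L hL ↦ ?_⟩
  · simpa [hdim] using tendsto_setIntegral_le_norm_sub volume hg hg0 hg2 x
  · calc _ ≤ _ := abs_integral_symmetrizedIntegrand_le volume hg hg0 hg2 x hL
      _ = _ := by
        rw [hdim, hball]
        push_cast
        ring
end
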